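/- If a function u(t,x,y) satisfies u_t - u_xx + u·u_y = u², then the function ū defined by ū(t,x,ȳ) := e^{-y}·u(t,x,y) where ȳ = -e^{-y} (i.e., ū(t,x,ȳ) = (-ȳ)·u(t,x,-ln(-ȳ)) for ȳ < 0) satisfies ū_t - ū_xx + ū·ū_{ȳ} = 0 on the region ȳ < 0. -/

import Mathlib

/-!
Along `ȳ = -e^{-y}` the variables `t, x` are untouched, so `ū_t` and `ū_xx` are `u_t` and `u_xx`
scaled by the constant `-ȳ`. Since `dy/dȳ = -1/ȳ`, the chain rule gives `ū_ȳ = -u + u_y`, hence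
`ū_t - ū_xx + ū ū_ȳ = (-ȳ) (u_t - u_xx + u u_y - u²) = 0`.
-/

open Real

lemma hasDerivAt_neg_log_neg {s : ℝ} (hs : s ≠ 0) :
    HasDerivAt (fun r : ℝ => -log (-r)) (-s⁻¹) s := by
  have h : HasDerivAt (fun r : ℝ => -log (-r)) (-((-s)⁻¹ * -1)) s :=
    ((hasDerivAt_log (neg_ne_zero.mpr hs)).comp s (hasDerivAt_neg s)).neg
  exact h.congr_deriv (by rw [inv_neg]; ring)

lemma hasDerivAt_neg_mul_comp_neg_log_neg {g : ℝ → ℝ} {s : ℝ} (hs : s ≠ 0)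
    (hg : DifferentiableAt ℝ g (-log (-s))) :
    HasDerivAt (fun r : ℝ => -r * g (-log (-r)))
      (-g (-log (-s)) + deriv g (-log (-s))) s := by
  have hcomp : HasDerivAt (fun r : ℝ => g (-log (-r))) (deriv g (-log (-s)) * -s⁻¹) s :=
    hg.hasDerivAt.comp s (hasDerivAt_neg_log_neg hs)
  exact ((hasDerivAt_neg s).mul hcomp).congr_deriv (by field_simp)

/-- If a C² function `u(t,x,y)` satisfies `u_t - u_xx + u·u_y = u²`,
then `ū(t,x,yb) := (-yb)·u(t,x,-ln(-yb))` (corresponding to `yb = -e^{-y}`,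
`ū = e^{-y}u`) satisfies `ū_t - ū_xx + ū·ū_yb = 0` on the region `yb < 0`. -/
theorem stmt_8
    (u : ℝ × ℝ × ℝ → ℝ) (hu : ContDiff ℝ 2 u)
    (hpde : ∀ t x y : ℝ,
      deriv (fun s => u (s, x, y)) t
        - deriv (fun s => deriv (fun r => u (t, r, y)) s) x
        + u (t, x, y) * deriv (fun s => u (t, x, s)) y = u (t, x, y) ^ 2)
    (v : ℝ × ℝ × ℝ → ℝ)
    (hv : v = fun p => (-p.2.2) * u (p.1, p.2.1, -Real.log (-p.2.2))) :
    ∀ t x yb : ℝ, yb < 0 →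
      deriv (fun s => v (s, x, yb)) t
        - deriv (fun s => deriv (fun r => v (t, r, yb)) s) x
        + v (t, x, yb) * deriv (fun s => v (t, x, s)) yb = 0 := by
  subst hv
  intro t x yb hyb
  have hu_y : Differentiable ℝ (fun s => u (t, x, s)) :=
    (hu.differentiable (by norm_num)).comp (by fun_prop)
  have v_t : deriv (fun s => -yb * u (s, x, -log (-yb))) t
      = -yb * deriv (fun s => u (s, x, -log (-yb))) t :=
    deriv_const_mul_field _
  have v_xx : deriv (fun s => deriv (fun r => -yb * u (t, r, -log (-yb))) s) x
      = -yb * deriv (fun s => deriv (fun r => u (t, r, -log (-yb))) s) x := by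
    simp only [deriv_const_mul_field]
  have v_yb : deriv (fun s => -s * u (t, x, -log (-s))) yb
      = -u (t, x, -log (-yb)) + deriv (fun s => u (t, x, s)) (-log (-yb)) :=
    (hasDerivAt_neg_mul_comp_neg_log_neg (g := fun s => u (t, x, s)) hyb.ne (hu_y _)).deriv
  simp only [v_t, v_xx, v_yb]
  linear_combination -yb * hpde t x (-log (-yb))
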